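/- For every natural number n and every real x > 0, x · |h_n^{(1)}(x)| ≥ 1; equivalently, | ∑_{m=0}^{n} ((n+m)!/(m!(n−m)!)) (i/(2x))^m | ≥ 1. In particular, the spherical Hankel function h_n^{(1)}(x) does not vanish for any real x > 0. -/

import Mathlib

/-!
`sphHankelSum n x` is the Bessel polynomial `y_n(z) = ∑ (n+k)!/((n-k)! k!) (z/2)^k` at `z = i/x`.
The three-term recurrence `y_{n+2} = (2n+3) z y_{n+1} + y_n` yields a coupled recurrence for
`|y_n(it)|²` and `Im (y_{n+1}(it) · conj y_n(it))`. Explicit polynomials in `t²` satisfy the same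
recurrence with the same initial values, so `|y_n(it)|² = ∑_k C(2k,k) 4^{-k} (n+k)!/(n-k)! t^{2k}`,
a polynomial with nonnegative coefficients and constant term `1`; hence `|y_n(it)|² ≥ 1`.
-/

open Real Finset

noncomputable section

/-- The polynomial factor in the spherical Hankel function:
`∑_{m=0}^{n} ((n+m)!/(m!(n−m)!)) (i/(2x))^m`. -/
def sphHankelSum (n : ℕ) (x : ℝ) : ℂ :=
  ∑ m ∈ Finset.range (n + 1),
    ((Nat.factorial (n + m) : ℂ) / ((Nat.factorial m : ℂ) * (Nat.factorial (n - m) : ℂ))) *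
      (Complex.I / (2 * (x : ℂ))) ^ m

/-- The spherical Hankel function of the first kind of order `n`:
`h_n^{(1)}(x) = (−i)^{n+1} (e^{ix}/x) ∑_{m=0}^{n} ((n+m)!/(m!(n−m)!)) (i/(2x))^m`. -/
def sphHankel1 (n : ℕ) (x : ℝ) : ℂ :=
  (-Complex.I) ^ (n + 1) * (Complex.exp (Complex.I * x) / (x : ℂ)) * sphHankelSum n x

open scoped Nat ComplexConjugate

theorem Nat.cast_descFactorial_succ {R : Type*} [Ring R] (m j : ℕ) :
    (m.descFactorial (j + 1) : R) = m.descFactorial j * (m - j) := by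
  rw [← descPochhammer_eval_eq_descFactorial, descPochhammer_succ_eval,
    descPochhammer_eval_eq_descFactorial]

section Coefficients

variable {R : Type*} [CommRing R] (n k : ℕ)

theorem cast_descFactorial_two_mul_add_two :
    ((n + k + 3).descFactorial (2 * k + 2) : R) =
      (2 * k + 2) * (2 * n + 3) * (n + k + 1).descFactorial (2 * k) +
        (n + k + 1).descFactorial (2 * k + 2) := by
  rw [show n + k + 3 = n + k + 1 + 1 + 1 by ring, Nat.succ_descFactorial_succ,
    Nat.succ_descFactorial_succ, Nat.cast_descFactorial_succ, Nat.cast_descFactorial_succ]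
  push_cast
  ring

theorem sub_mul_cast_descFactorial_two_mul :
    ((n : R) + 1 - k) * (n + 1 + k).descFactorial (2 * k) =
      (n + 1 + k) * (n + k).descFactorial (2 * k) := by
  have h := Nat.cast_descFactorial_succ (R := R) (n + k + 1) (2 * k)
  rw [Nat.succ_descFactorial_succ] at h
  push_cast at h
  rw [show n + 1 + k = n + k + 1 by ring]
  linear_combination -h

end Coefficients

/-- The coefficient `(n + k)! / ((n - k)! k!)` of `(z / 2) ^ k` in the Bessel polynomial `y_n`,
written so that it vanishes for `k > n`. -/
def besselCoeff (n k : ℕ) : ℝ := (n + k).descFactorial (2 * k) / k !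

def besselPoly (n : ℕ) (z : ℂ) : ℂ :=
  ∑ k ∈ range (n + 1), (besselCoeff n k : ℂ) * (z / 2) ^ k

theorem besselCoeff_zero_right (n : ℕ) : besselCoeff n 0 = 1 := by
  simp [besselCoeff]

theorem besselCoeff_of_lt {n k : ℕ} (h : n < k) : besselCoeff n k = 0 := by
  rw [besselCoeff, Nat.descFactorial_of_lt (by omega), Nat.cast_zero, zero_div]

theorem besselCoeff_add_two_succ (n k : ℕ) :
    besselCoeff (n + 2) (k + 1) =
      2 * (2 * n + 3) * besselCoeff (n + 1) k + besselCoeff n (k + 1) := by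
  have h := cast_descFactorial_two_mul_add_two (R := ℝ) n k
  simp only [besselCoeff, Nat.factorial_succ, Nat.cast_mul]
  rw [show n + 2 + (k + 1) = n + k + 3 by ring, show n + 1 + k = n + k + 1 by ring,
    show n + (k + 1) = n + k + 1 by ring, show 2 * (k + 1) = 2 * k + 2 by ring, h]
  field_simp
  push_cast
  ring

theorem besselPoly_eq_sum_range {n N : ℕ} (hN : n + 1 ≤ N) (z : ℂ) :
    besselPoly n z = ∑ k ∈ range N, (besselCoeff n k : ℂ) * (z / 2) ^ k :=
  (eventually_constant_sum (fun k hk => by simp [besselCoeff_of_lt (show n < k by omega)]) hN).symm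

theorem besselPoly_zero (z : ℂ) : besselPoly 0 z = 1 := by
  simp [besselPoly, besselCoeff_zero_right]

theorem besselPoly_one (z : ℂ) : besselPoly 1 z = 1 + z := by
  simp [besselPoly, sum_range_succ, besselCoeff, mul_div_cancel₀]

theorem besselPoly_add_two (n : ℕ) (z : ℂ) :
    besselPoly (n + 2) z = (2 * n + 3) * z * besselPoly (n + 1) z + besselPoly n z := by
  have hterm (k : ℕ) :
      ((2 * (2 * n + 3) * besselCoeff (n + 1) k + besselCoeff n (k + 1) : ℝ) : ℂ) *
          (z / 2) ^ (k + 1) =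
        (2 * n + 3) * z * (besselCoeff (n + 1) k * (z / 2) ^ k) +
          besselCoeff n (k + 1) * (z / 2) ^ (k + 1) := by
    push_cast
    ring
  rw [besselPoly, besselPoly_eq_sum_range (le_refl (n + 2)),
    besselPoly_eq_sum_range (show n + 1 ≤ n + 3 by omega), sum_range_succ' _ (n + 2),
    sum_range_succ' (fun k => (besselCoeff n k : ℂ) * (z / 2) ^ k) (n + 2)]
  simp only [besselCoeff_add_two_succ, hterm, sum_add_distrib, mul_sum, besselCoeff_zero_right]
  ring

-- Closed forms, in `u = t²`, of `|y_n(it)|²` and of `Im (y_n(it) · conj y_{n-1}(it)) / t`.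
def besselNormSqCoeff (n k : ℕ) : ℝ := k.centralBinom / 4 ^ k * (n + k).descFactorial (2 * k)

def besselNormSq (n : ℕ) (u : ℝ) : ℝ := ∑ k ∈ range (n + 1), besselNormSqCoeff n k * u ^ k

def besselCross (n : ℕ) (u : ℝ) : ℝ :=
  ∑ k ∈ range (n + 1), (n - k) * besselNormSqCoeff n k * u ^ k

theorem besselNormSqCoeff_zero_right (n : ℕ) : besselNormSqCoeff n 0 = 1 := by
  simp [besselNormSqCoeff]

theorem besselNormSqCoeff_of_lt {n k : ℕ} (h : n < k) : besselNormSqCoeff n k = 0 := by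
  rw [besselNormSqCoeff, Nat.descFactorial_of_lt (by omega), Nat.cast_zero, mul_zero]

theorem besselNormSqCoeff_nonneg (n k : ℕ) : 0 ≤ besselNormSqCoeff n k := by
  unfold besselNormSqCoeff
  positivity

theorem besselNormSqCoeff_add_two_succ (n k : ℕ) :
    besselNormSqCoeff (n + 2) (k + 1) =
      (2 * n + 3) * (2 * k + 1) * besselNormSqCoeff (n + 1) k + besselNormSqCoeff n (k + 1) := by
  have hc : ((k + 1).centralBinom : ℝ) * (k + 1) = 2 * (2 * k + 1) * k.centralBinom := by
    exact_mod_cast (mul_comm _ _).trans (Nat.succ_mul_centralBinom_succ k)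
  simp only [besselNormSqCoeff]
  rw [show n + 2 + (k + 1) = n + k + 3 by ring, show n + 1 + k = n + k + 1 by ring,
    show n + (k + 1) = n + k + 1 by ring, show 2 * (k + 1) = 2 * k + 2 by ring,
    cast_descFactorial_two_mul_add_two]
  linear_combination
    (2 * (2 * n + 3) * ((n + k + 1).descFactorial (2 * k) : ℝ) / 4 ^ (k + 1)) * hc

theorem sub_mul_besselNormSqCoeff_succ (n k : ℕ) :
    ((n : ℝ) + 1 - k) * besselNormSqCoeff (n + 1) k = (n + 1 + k) * besselNormSqCoeff n k := by
  simp only [besselNormSqCoeff]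
  linear_combination
    (k.centralBinom / 4 ^ k : ℝ) * sub_mul_cast_descFactorial_two_mul (R := ℝ) n k

theorem one_le_besselNormSq (n : ℕ) {u : ℝ} (hu : 0 ≤ u) : 1 ≤ besselNormSq n u := by
  rw [besselNormSq, sum_range_succ', besselNormSqCoeff_zero_right, pow_zero, mul_one,
    le_add_iff_nonneg_left]
  exact sum_nonneg fun k _ => mul_nonneg (besselNormSqCoeff_nonneg _ _) (pow_nonneg hu _)

theorem besselCross_succ (n : ℕ) (u : ℝ) :
    besselCross (n + 1) u = (2 * n + 1) * besselNormSq n u - besselCross n u := by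
  rw [besselCross, sum_range_succ, besselNormSq, besselCross, mul_sum, ← sum_sub_distrib]
  push_cast
  rw [sub_self, zero_mul, zero_mul, add_zero]
  refine sum_congr rfl fun k _ => ?_
  linear_combination u ^ k * sub_mul_besselNormSqCoeff_succ n k

theorem besselNormSq_add_two (n : ℕ) (u : ℝ) :
    besselNormSq (n + 2) u = (2 * n + 3) ^ 2 * u * besselNormSq (n + 1) u + besselNormSq n u -
      2 * (2 * n + 3) * u * besselCross (n + 1) u := by
  have hn : besselNormSq n u = ∑ k ∈ range (n + 3), besselNormSqCoeff n k * u ^ k :=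
    (eventually_constant_sum (fun k hk => by
      rw [besselNormSqCoeff_of_lt (show n < k by omega), zero_mul]) (by omega)).symm
  have hterm (k : ℕ) :
      ((2 * n + 3) * (2 * k + 1) * besselNormSqCoeff (n + 1) k + besselNormSqCoeff n (k + 1)) *
          u ^ (k + 1) =
        (2 * n + 3) ^ 2 * u * (besselNormSqCoeff (n + 1) k * u ^ k) -
          2 * (2 * n + 3) * u * ((↑(n + 1) - k) * besselNormSqCoeff (n + 1) k * u ^ k) +
            besselNormSqCoeff n (k + 1) * u ^ (k + 1) := by
    push_cast
    ring
  rw [hn, besselNormSq, besselNormSq, besselCross, sum_range_succ' _ (n + 2),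
    sum_range_succ' (fun k => besselNormSqCoeff n k * u ^ k) (n + 2)]
  simp only [besselNormSqCoeff_add_two_succ, hterm, besselNormSqCoeff_zero_right, mul_sum,
    sum_add_distrib, sum_sub_distrib]
  ring

section ImaginaryAxis

open Complex

theorem normSq_besselPoly_add_two (n : ℕ) (t : ℝ) :
    normSq (besselPoly (n + 2) (I * t)) =
      (2 * n + 3) ^ 2 * t ^ 2 * normSq (besselPoly (n + 1) (I * t)) +
        normSq (besselPoly n (I * t)) -
          2 * (2 * n + 3) * t * (besselPoly (n + 1) (I * t) * conj (besselPoly n (I * t))).im := by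
  rw [besselPoly_add_two]
  generalize besselPoly (n + 1) (I * t) = a
  generalize besselPoly n (I * t) = b
  simp only [normSq_apply, mul_re, mul_im, add_re, add_im, conj_re, conj_im, I_re, I_im, ofReal_re,
    ofReal_im, natCast_re, natCast_im, re_ofNat, im_ofNat]
  ring

theorem im_besselPoly_mul_conj_add_two (n : ℕ) (t : ℝ) :
    (besselPoly (n + 2) (I * t) * conj (besselPoly (n + 1) (I * t))).im =
      (2 * n + 3) * t * normSq (besselPoly (n + 1) (I * t)) -
        (besselPoly (n + 1) (I * t) * conj (besselPoly n (I * t))).im := by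
  rw [besselPoly_add_two]
  generalize besselPoly (n + 1) (I * t) = a
  generalize besselPoly n (I * t) = b
  simp only [normSq_apply, mul_re, mul_im, add_re, add_im, conj_re, conj_im, I_re, I_im, ofReal_re,
    ofReal_im, natCast_re, natCast_im, re_ofNat, im_ofNat]
  ring

theorem normSq_besselPoly_I_mul (n : ℕ) (t : ℝ) :
    normSq (besselPoly n (I * t)) = besselNormSq n (t ^ 2) := by
  suffices h : ∀ n, normSq (besselPoly n (I * t)) = besselNormSq n (t ^ 2) ∧
      normSq (besselPoly (n + 1) (I * t)) = besselNormSq (n + 1) (t ^ 2) ∧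
      (besselPoly (n + 1) (I * t) * conj (besselPoly n (I * t))).im =
        t * besselCross (n + 1) (t ^ 2) from (h n).1
  intro n
  induction n with
  | zero =>
    refine ⟨by simp [besselPoly_zero, besselNormSq, besselNormSqCoeff_zero_right], ?_, ?_⟩
    · norm_num [besselPoly_one, besselNormSq, besselNormSqCoeff, sum_range_succ, normSq_apply,
        Nat.centralBinom_eq_two_mul_choose, sq]
    · simp [besselPoly_zero, besselPoly_one, besselCross, sum_range_succ,
        besselNormSqCoeff_zero_right]
  | succ n ih =>
    obtain ⟨hn, hn1, hcross⟩ := ih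
    refine ⟨hn1, ?_, ?_⟩
    · rw [normSq_besselPoly_add_two, besselNormSq_add_two, hn, hn1, hcross]
      ring
    · rw [im_besselPoly_mul_conj_add_two, besselCross_succ (n + 1), hn1, hcross]
      push_cast
      ring

end ImaginaryAxis

theorem sphHankelSum_eq_besselPoly (n : ℕ) (x : ℝ) :
    sphHankelSum n x = besselPoly n (Complex.I * ↑x⁻¹) := by
  refine sum_congr rfl fun m hm => ?_
  have hmn : 2 * m ≤ n + m := by have := mem_range.1 hm; omega
  have hfac := Nat.factorial_mul_descFactorial hmn
  rw [show n + m - 2 * m = n - m by omega] at hfac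
  have hne : ((n - m)! : ℂ) ≠ 0 := Nat.cast_ne_zero.2 (n - m).factorial_ne_zero
  rw [besselCoeff, ← hfac]
  push_cast
  field_simp

theorem one_le_norm_sphHankelSum (n : ℕ) (x : ℝ) : 1 ≤ ‖sphHankelSum n x‖ := by
  have h : 1 ≤ ‖sphHankelSum n x‖ ^ 2 := by
    rw [Complex.sq_norm, sphHankelSum_eq_besselPoly, normSq_besselPoly_I_mul]
    exact one_le_besselNormSq n (sq_nonneg _)
  exact (one_le_sq_iff₀ (norm_nonneg _)).1 h

theorem norm_sphHankel1 (n : ℕ) (x : ℝ) :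
    ‖sphHankel1 n x‖ = ‖sphHankelSum n x‖ / |x| := by
  simp [sphHankel1, Complex.norm_exp, div_eq_inv_mul]

/-- **Nonvanishing of spherical Hankel functions on the positive real axis.**
For every `n ∈ ℕ` and every real `x > 0`, `x·|h_n^{(1)}(x)| ≥ 1`; equivalently
`|∑_{m=0}^{n} ((n+m)!/(m!(n−m)!)) (i/(2x))^m| ≥ 1`.  In particular
`h_n^{(1)}(x) ≠ 0`. -/
theorem sphHankel1_ne_zero (n : ℕ) (x : ℝ) (hx : 0 < x) :
    1 ≤ x * ‖sphHankel1 n x‖ ∧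
    1 ≤ ‖sphHankelSum n x‖ ∧
    sphHankel1 n x ≠ 0 := by
  have hsum := one_le_norm_sphHankelSum n x
  have hnorm : x * ‖sphHankel1 n x‖ = ‖sphHankelSum n x‖ := by
    rw [norm_sphHankel1, abs_of_pos hx]
    field_simp
  refine ⟨hnorm ▸ hsum, hsum, fun h => ?_⟩
  rw [h, norm_zero, mul_zero] at hnorm
  linarith

end
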